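/- Let m ≥ 1 be an integer, let 0 < x_1 < x_2 < ... < x_m be real numbers, and let β_1, ..., β_m be purely imaginary complex numbers. Then, with ω = e^{2πi/3}, Σ_{1 ≤ j ≠ k ≤ m} Re( 4 (ω − 1) x_k^{2/3} β_k x_j^{2/3} β_j / ( 3 (x_j^{2/3} − x_k^{2/3}) (x_j^{2/3} − ω x_k^{2/3}) ) ) = 0, where the sum runs over all ordered pairs (j,k) with j ≠ k. -/

import Mathlib

/-!
Write `a_j = x_j^{2/3}` and `β_j = i s_j`. The `(j, k)` summand is the real number
`-(4/3) a_j a_k s_j s_k`, symmetric in `j, k`, times `Re ((ω - 1) / ((a_j - a_k) (a_j - ω a_k)))`.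
Since `|ω| = 1`, i.e. `conj ω = ω⁻¹`, conjugating this quotient gives minus the quotient with `j` and
`k` exchanged, so the summands are antisymmetric in `(j, k)` and their sum vanishes.
-/

open Real Complex Finset

noncomputable section

/-- `ω = e^{2πi/3}`. -/
def pOmega : ℂ := Complex.exp (2 * Real.pi * Complex.I / 3)

open ComplexConjugate

lemma sum_sum_filter_ne_eq_zero_of_add_swap {ι M : Type*} [Fintype ι] [DecidableEq ι]
    [AddCommMonoid M] (g : ι → ι → M) (hg : ∀ j k, j ≠ k → g j k + g k j = 0) :
    ∑ j, ∑ k ∈ univ.filter (fun k => k ≠ j), g j k = 0 := by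
  simp_rw [sum_filter, ← Fintype.sum_prod_type']
  refine sum_ninvolution Prod.swap (fun p => ?_) (fun p hp => ?_) (fun _ => mem_univ _)
    Prod.swap_swap
  · by_cases h : p.2 = p.1
    · simp [h]
    · simpa [h, Ne.symm h] using hg p.1 p.2 (Ne.symm h)
  · intro hswap
    have hdiag : p.2 = p.1 := congrArg Prod.fst hswap
    simp [hdiag] at hp

lemma norm_pOmega : ‖pOmega‖ = 1 := by
  rw [pOmega, Complex.norm_exp]; simp

lemma conj_div_sub_mul_sub_eq_neg_swap {w : ℂ} (hw : ‖w‖ = 1) (a b : ℝ) :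
    conj ((w - 1) / ((a - b) * (a - w * b))) = -((w - 1) / ((b - a) * (b - w * a))) := by
  have hw0 : w ≠ 0 := by rintro rfl; simp at hw
  simp only [map_div₀, map_mul, map_sub, map_one, conj_ofReal, ← Complex.inv_eq_conj hw]
  calc (w⁻¹ - 1) / ((a - b) * (a - w⁻¹ * b))
      = ((1 - w) * w⁻¹) / ((a - b) * (w * a - b) * w⁻¹) := by
        congr 1 <;> field_simp
    _ = (1 - w) / ((a - b) * (w * a - b)) := mul_div_mul_right _ _ (inv_ne_zero hw0)
    _ = -((w - 1) / ((b - a) * (b - w * a))) := by ring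

lemma re_div_sub_mul_sub_add_swap {w : ℂ} (hw : ‖w‖ = 1) (a b : ℝ) :
    ((w - 1) / ((a - b) * (a - w * b))).re + ((w - 1) / ((b - a) * (b - w * a))).re = 0 := by
  rw [← Complex.conj_re, conj_div_sub_mul_sub_eq_neg_swap hw, Complex.neg_re, neg_add_cancel]

lemma re_pearcey_pair_add_swap {w : ℂ} (hw : ‖w‖ = 1) (a b : ℝ) {β γ : ℂ}
    (hβ : β.re = 0) (hγ : γ.re = 0) :
    (4 * (w - 1) * b * γ * a * β / (3 * (a - b) * (a - w * b))).re
      + (4 * (w - 1) * a * β * b * γ / (3 * (b - a) * (b - w * a))).re = 0 := by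
  have hcoeff : 4 * a * b * (γ * β) / 3 = ((-(4 / 3) * a * b * β.im * γ.im : ℝ) : ℂ) := by
    have hprod : γ * β = ((-(β.im * γ.im) : ℝ) : ℂ) :=
      Complex.ext (by simp [hβ, hγ, mul_comm]) (by simp [hβ, hγ])
    rw [hprod]; push_cast; ring
  have h₁ : 4 * (w - 1) * b * γ * a * β / (3 * (a - b) * (a - w * b))
      = ((-(4 / 3) * a * b * β.im * γ.im : ℝ) : ℂ) * ((w - 1) / ((a - b) * (a - w * b))) := by
    rw [← hcoeff, ← mul_div_mul_comm]; ring
  have h₂ : 4 * (w - 1) * a * β * b * γ / (3 * (b - a) * (b - w * a))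
      = ((-(4 / 3) * a * b * β.im * γ.im : ℝ) : ℂ) * ((w - 1) / ((b - a) * (b - w * a))) := by
    rw [← hcoeff, ← mul_div_mul_comm]; ring
  rw [h₁, h₂, re_ofReal_mul, re_ofReal_mul, ← mul_add, re_div_sub_mul_sub_add_swap hw, mul_zero]

theorem pearcey_offdiagonal_real_part_sum_general
    (m : ℕ) (x : Fin m → ℝ)
    (β : Fin m → ℂ) (hβ : ∀ j, (β j).re = 0) :
    (∑ j, ∑ k ∈ Finset.univ.filter (fun k => k ≠ j),
      (4 * (pOmega - 1) * (x k ^ ((2 : ℝ) / 3) : ℝ) * β k * (x j ^ ((2 : ℝ) / 3) : ℝ) * β j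
        / (3 * (((x j ^ ((2 : ℝ) / 3) : ℝ) : ℂ) - ((x k ^ ((2 : ℝ) / 3) : ℝ) : ℂ))
            * (((x j ^ ((2 : ℝ) / 3) : ℝ) : ℂ)
              - pOmega * ((x k ^ ((2 : ℝ) / 3) : ℝ) : ℂ)))).re) = 0 :=
  sum_sum_filter_ne_eq_zero_of_add_swap _ fun j k _ =>
    re_pearcey_pair_add_swap norm_pOmega _ _ (hβ j) (hβ k)

theorem pearcey_offdiagonal_real_part_sum
    (m : ℕ) (hm : 1 ≤ m) (x : Fin m → ℝ)
    (hxpos : ∀ j, 0 < x j) (hxmono : StrictMono x)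
    (β : Fin m → ℂ) (hβ : ∀ j, (β j).re = 0) :
    (∑ j, ∑ k ∈ Finset.univ.filter (fun k => k ≠ j),
      (4 * (pOmega - 1) * (x k ^ ((2 : ℝ) / 3) : ℝ) * β k * (x j ^ ((2 : ℝ) / 3) : ℝ) * β j
        / (3 * (((x j ^ ((2 : ℝ) / 3) : ℝ) : ℂ) - ((x k ^ ((2 : ℝ) / 3) : ℝ) : ℂ))
            * (((x j ^ ((2 : ℝ) / 3) : ℝ) : ℂ)
              - pOmega * ((x k ^ ((2 : ℝ) / 3) : ℝ) : ℂ)))).re) = 0 :=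
  pearcey_offdiagonal_real_part_sum_general m x β hβ
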